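/- Under the B-EDD model, the occurrence probability of any motif s factorizes as φ_s = (∏_{u=1}^{p_s} λ_{d_u^s} · ∏_{v=1}^{q_s} μ_{e_v^s}) / ρ^{d_+^s}, where λ_d = ρ^d ∫_0^1 g(u)^d du is the occurrence probability of the top star with d branches and μ_d = ρ^d ∫_0^1 h(v)^d dv is that of the bottom star with d branches, and ρ = λ_1 = μ_1 is the edge probability. -/

import Mathlib

/-!
Given the latent positions `U`, `V`, the edge variables `W i j` are independent uniforms and the
edge `(i, j)` is present when `W i j ≤ ρ g(U i) h(V j)`, a threshold in `[0, 1]`. Hence the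
motif occurs with conditional probability `∏_{A i j} ρ g(U i) h(V j)
= ρ^{d₊} ∏ᵢ g(U i)^{dᵢ} ∏ⱼ h(V j)^{eⱼ}`, and integrating out the independent `U i`, `V j` gives
`ρ^{d₊} ∏ᵢ ∫ g^{dᵢ} ∏ⱼ ∫ h^{eⱼ}`. Since `∑ᵢ dᵢ = ∑ⱼ eⱼ = d₊`, this is
`(∏ᵢ λ_{dᵢ} ∏ⱼ μ_{eⱼ}) / ρ^{d₊}`.
-/

open MeasureTheory Finset

theorem prod_filter_mul_mul {M α β : Type*} [CommMonoid M] [Fintype α] [Fintype β]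
    (r : α → β → Prop) [∀ a b, Decidable (r a b)] (c : M) (a : α → M) (b : β → M) :
    ∏ x ∈ univ.filter (fun x : α × β => r x.1 x.2), c * a x.1 * b x.2
      = c ^ (∑ i, #(univ.filter (r i))) * (∏ i, a i ^ #(univ.filter (r i)))
        * ∏ j, b j ^ #(univ.filter (r · j)) := by
  rw [prod_filter, Fintype.prod_prod_type]
  simp only [← prod_filter, prod_mul_distrib, prod_const, prod_pow_eq_pow_sum]
  congr 1
  exact (prod_prod_bipartiteAbove_eq_prod_prod_bipartiteBelow (s := univ) (t := univ) (r := r)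
    (f := fun _ j => b j)).trans
    (by simp only [bipartiteBelow, prod_const])

theorem lintegral_pi_fin_prod_eq_prod {α : Type*} [MeasurableSpace α] (ν : Measure α)
    [SigmaFinite ν] {n : ℕ} (f : Fin n → α → ENNReal) (hf : ∀ i, Measurable (f i)) :
    ∫⁻ x, ∏ i, f i (x i) ∂(Measure.pi fun _ => ν) = ∏ i, ∫⁻ a, f i a ∂ν := by
  induction n with
  | zero => simp
  | succ n ih =>
    have hmeas : Measurable fun y : α × (Fin n → α) => f 0 y.1 * ∏ i : Fin n, f i.succ (y.2 i) :=
      ((hf 0).comp measurable_fst).mul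
        (measurable_prod _ fun i _ =>
          (hf i.succ).comp ((measurable_pi_apply i).comp measurable_snd))
    calc ∫⁻ x, ∏ i, f i (x i) ∂(Measure.pi fun _ => ν)
        = ∫⁻ y, f 0 y.1 * ∏ i : Fin n, f i.succ (y.2 i) ∂(ν.prod (Measure.pi fun _ => ν)) := by
          rw [← (measurePreserving_piFinSuccAbove (fun _ : Fin (n + 1) => ν) 0).lintegral_comp
            hmeas]
          simp_rw [Fin.prod_univ_succ]
          rfl
      _ = ∏ i, ∫⁻ a, f i a ∂ν := by
          rw [lintegral_prod_mul (f := f 0) (g := fun w : Fin n → α => ∏ i : Fin n, f i.succ (w i))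
              (hf 0).aemeasurable
              (measurable_prod _ fun i _ => (hf i.succ).comp (measurable_pi_apply i)).aemeasurable,
            ih _ fun i => hf i.succ, Fin.prod_univ_succ]

theorem lintegral_prod_pi_prod_mul_prod {α : Type*} [MeasurableSpace α] (ν : Measure α)
    [SigmaFinite ν] {p q : ℕ} (F : Fin p → α → ENNReal) (G : Fin q → α → ENNReal)
    (hF : ∀ i, Measurable (F i)) (hG : ∀ j, Measurable (G j)) :
    ∫⁻ x, (∏ i, F i (x.1 i)) * ∏ j, G j (x.2 j)
        ∂((Measure.pi fun _ => ν).prod (Measure.pi fun _ => ν))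
      = (∏ i, ∫⁻ a, F i a ∂ν) * ∏ j, ∫⁻ a, G j a ∂ν := by
  rw [lintegral_prod_mul (f := fun u : Fin p → α => ∏ i, F i (u i))
      (g := fun v : Fin q → α => ∏ j, G j (v j))
      (measurable_prod _ fun i _ => (hF i).comp (measurable_pi_apply i)).aemeasurable
      (measurable_prod _ fun j _ => (hG j).comp (measurable_pi_apply j)).aemeasurable,
    lintegral_pi_fin_prod_eq_prod ν F hF, lintegral_pi_fin_prod_eq_prod ν G hG]

theorem toReal_lintegral_ofReal_pow {α : Type*} [MeasurableSpace α] {ν : Measure α} {f : α → ℝ}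
    (hf : AEMeasurable f ν) (hf0 : 0 ≤ᵐ[ν] f) (k : ℕ) :
    (∫⁻ x, ENNReal.ofReal (f x) ^ k ∂ν).toReal = ∫ x, f x ^ k ∂ν := by
  rw [integral_eq_lintegral_of_nonneg_ae (hf0.mono fun x hx => pow_nonneg hx k)
    (hf.pow_const k).aestronglyMeasurable]
  exact congrArg ENNReal.toReal
    (lintegral_congr_ae (hf0.mono fun x hx => (ENNReal.ofReal_pow hx k).symm))

theorem volume_restrict_unitInterval_Iic {c : ℝ} (hc : c ≤ 1) :
    volume.restrict (Set.Icc (0 : ℝ) 1) (Set.Iic c) = ENNReal.ofReal c := by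
  have hinter : Set.Iic c ∩ Set.Icc 0 1 = Set.Icc 0 c := by
    ext x
    simp only [Set.mem_inter_iff, Set.mem_Iic, Set.mem_Icc]
    constructor
    · rintro ⟨hxc, hx0, -⟩
      exact ⟨hx0, hxc⟩
    · rintro ⟨hx0, hxc⟩
      exact ⟨hxc, hx0, hxc.trans hc⟩
  rw [Measure.restrict_apply measurableSet_Iic, hinter, Real.volume_Icc, sub_zero]

theorem pi_unitInterval_setOf_le {ι : Type*} [Fintype ι] (s : Finset ι) {c : ι → ℝ}
    (hc : ∀ k ∈ s, c k ≤ 1) :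
    Measure.pi (fun _ : ι => volume.restrict (Set.Icc (0 : ℝ) 1)) {w | ∀ k ∈ s, w k ≤ c k}
      = ∏ k ∈ s, ENNReal.ofReal (c k) := by
  classical
  have hbox : {w : ι → ℝ | ∀ k ∈ s, w k ≤ c k}
      = Set.univ.pi fun k => if k ∈ s then Set.Iic (c k) else Set.univ := by
    ext w
    simp only [Set.mem_ofPred_eq, Set.mem_univ_pi]
    refine forall_congr' fun k => ?_
    split_ifs with hk <;> simp [hk]
  have hfactor : ∀ k, volume.restrict (Set.Icc (0 : ℝ) 1)
      (if k ∈ s then Set.Iic (c k) else Set.univ) = if k ∈ s then ENNReal.ofReal (c k) else 1 := by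
    intro k
    split_ifs with hk
    · exact volume_restrict_unitInterval_Iic (hc k hk)
    · simp [Real.volume_Icc]
  rw [hbox, Measure.pi_pi]
  simp only [hfactor, prod_ite_mem, Finset.univ_inter]

theorem ae_pi_restrict_mem {ι α : Type*} [Fintype ι] [MeasurableSpace α] (ν : Measure α)
    [SigmaFinite ν] {s : Set α} (hs : MeasurableSet s) :
    ∀ᵐ x ∂(Measure.pi fun _ : ι => ν.restrict s), ∀ i, x i ∈ s :=
  ae_all_iff.2 fun _ => Measure.tendsto_eval_ae_ae.eventually (ae_restrict_mem hs)

theorem prod_pi_unitInterval_setOf_le {X ι : Type*} [MeasurableSpace X] (m : Measure X)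
    [SFinite m] [Fintype ι] (s : Finset ι) {c : X → ι → ℝ} (hc : Measurable c)
    (hc1 : ∀ᵐ x ∂m, ∀ k ∈ s, c x k ≤ 1) :
    (m.prod (Measure.pi fun _ : ι => volume.restrict (Set.Icc (0 : ℝ) 1)))
        {z | ∀ k ∈ s, z.2 k ≤ c z.1 k}
      = ∫⁻ x, ∏ k ∈ s, ENNReal.ofReal (c x k) ∂m := by
  have hmeas : MeasurableSet {z : X × (ι → ℝ) | ∀ k ∈ s, z.2 k ≤ c z.1 k} := by
    simp only [Set.ofPred_forall]
    exact Finset.measurableSet_biInter s fun k _ => measurableSet_le (by fun_prop) (by fun_prop)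
  rw [Measure.prod_apply hmeas]
  exact lintegral_congr_ae (hc1.mono fun x hx => pi_unitInterval_setOf_le s hx)

theorem measure_motif_eq {p q : ℕ} (A : Fin p → Fin q → Bool) {ρ : ℝ} (hρ : 0 ≤ ρ)
    {g h : ℝ → ℝ} (hgm : Measurable g) (hhm : Measurable h) (hg0 : ∀ u, 0 ≤ g u)
    (hbound : ∀ u ∈ Set.Icc (0 : ℝ) 1, ∀ v ∈ Set.Icc (0 : ℝ) 1, ρ * g u * h v ≤ 1)
    (d : Fin p → ℕ) (e : Fin q → ℕ)
    (hd : ∀ i, d i = #(univ.filter fun j => A i j = true))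
    (he : ∀ j, e j = #(univ.filter fun i => A i j = true)) :
    ((Measure.pi fun _ : Fin p => volume.restrict (Set.Icc (0 : ℝ) 1)).prod
        ((Measure.pi fun _ : Fin q => volume.restrict (Set.Icc (0 : ℝ) 1)).prod
          (Measure.pi fun _ : Fin p × Fin q => volume.restrict (Set.Icc (0 : ℝ) 1))))
        {ω | ∀ i j, A i j = true → ω.2.2 (i, j) ≤ ρ * g (ω.1 i) * h (ω.2.1 j)}
      = ENNReal.ofReal ρ ^ (∑ i, d i)
        * ((∏ i, ∫⁻ u in Set.Icc (0 : ℝ) 1, ENNReal.ofReal (g u) ^ d i)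
          * ∏ j, ∫⁻ v in Set.Icc (0 : ℝ) 1, ENNReal.ofReal (h v) ^ e j) := by
  set ν := volume.restrict (Set.Icc (0 : ℝ) 1)
  set E := univ.filter fun k : Fin p × Fin q => A k.1 k.2 = true
  have hevent : MeasurableEquiv.prodAssoc ⁻¹'
        {ω : (Fin p → ℝ) × (Fin q → ℝ) × (Fin p × Fin q → ℝ) |
          ∀ i j, A i j = true → ω.2.2 (i, j) ≤ ρ * g (ω.1 i) * h (ω.2.1 j)}
      = {z | ∀ k ∈ E, z.2 k ≤ ρ * g (z.1.1 k.1) * h (z.1.2 k.2)} := by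
    ext z
    simp [E, MeasurableEquiv.prodAssoc]
  have hle : ∀ᵐ x ∂((Measure.pi fun _ : Fin p => ν).prod (Measure.pi fun _ : Fin q => ν)),
      ∀ k ∈ E, ρ * g (x.1 k.1) * h (x.2 k.2) ≤ 1 := by
    filter_upwards [Measure.quasiMeasurePreserving_fst.ae (ae_pi_restrict_mem _ measurableSet_Icc),
      Measure.quasiMeasurePreserving_snd.ae (ae_pi_restrict_mem _ measurableSet_Icc)]
      with x hu hv k _
    exact hbound _ (hu k.1) _ (hv k.2)
  have hfactor : ∀ x : (Fin p → ℝ) × (Fin q → ℝ),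
      ∏ k ∈ E, ENNReal.ofReal (ρ * g (x.1 k.1) * h (x.2 k.2))
        = ENNReal.ofReal ρ ^ (∑ i, d i)
          * ((∏ i, ENNReal.ofReal (g (x.1 i)) ^ d i) * ∏ j, ENNReal.ofReal (h (x.2 j)) ^ e j) := by
    intro x
    simp only [ENNReal.ofReal_mul (mul_nonneg hρ (hg0 _)), ENNReal.ofReal_mul hρ, hd, he,
      ← mul_assoc]
    exact prod_filter_mul_mul (fun i j => A i j = true) (ENNReal.ofReal ρ)
      (fun i => ENNReal.ofReal (g (x.1 i))) (fun j => ENNReal.ofReal (h (x.2 j)))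
  rw [← Measure.prodAssoc_prod, MeasurableEquiv.map_apply, hevent,
    prod_pi_unitInterval_setOf_le _ _ (by fun_prop) hle, lintegral_congr hfactor,
    lintegral_const_mul' _ _ (ENNReal.pow_ne_top ENNReal.ofReal_ne_top),
    lintegral_prod_pi_prod_mul_prod ν (fun i u => ENNReal.ofReal (g u) ^ d i)
      (fun j v => ENNReal.ofReal (h v) ^ e j) (fun i => by fun_prop) (fun j => by fun_prop)]

theorem motif_probability_star_factorization_general
    (p q : ℕ) (A : Fin p → Fin q → Bool)
    (ρ : ℝ) (g h : ℝ → ℝ)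
    (hgm : Measurable g) (hhm : Measurable h)
    (hg0 : ∀ u, 0 ≤ g u) (hh0 : ∀ v, 0 ≤ h v)
    (hρ : 0 < ρ)
    (hbound : ∀ u ∈ Set.Icc (0:ℝ) 1, ∀ v ∈ Set.Icc (0:ℝ) 1, ρ * g u * h v ≤ 1)
    (μ : Measure ((Fin p → ℝ) × (Fin q → ℝ) × (Fin p × Fin q → ℝ)))
    (hμ : μ = (Measure.pi fun _ : Fin p => volume.restrict (Set.Icc (0:ℝ) 1)).prod
        ((Measure.pi fun _ : Fin q => volume.restrict (Set.Icc (0:ℝ) 1)).prod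
          (Measure.pi fun _ : Fin p × Fin q => volume.restrict (Set.Icc (0:ℝ) 1))))
    (d : Fin p → ℕ) (e : Fin q → ℕ) (dplus : ℕ)
    (hd : ∀ i, d i = (univ.filter fun j => A i j = true).card)
    (he : ∀ j, e j = (univ.filter fun i => A i j = true).card)
    (hdplus : dplus = ∑ i, d i)
    (lam mu : ℕ → ℝ)
    (hlam : ∀ k, lam k = ρ ^ k * ∫ u in Set.Icc (0:ℝ) 1, g u ^ k)
    (hmu : ∀ k, mu k = ρ ^ k * ∫ v in Set.Icc (0:ℝ) 1, h v ^ k) :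
    (μ {ω | ∀ i j, A i j = true →
        ω.2.2 (i, j) ≤ ρ * g (ω.1 i) * h (ω.2.1 j)}).toReal
      = ((∏ i, lam (d i)) * (∏ j, mu (e j))) / ρ ^ dplus := by
  have hedges : ∑ j, e j = dplus := by
    simp only [hdplus, hd, he]
    exact (sum_card_bipartiteAbove_eq_sum_card_bipartiteBelow (r := fun i j => A i j = true)).symm
  subst hμ
  simp only [measure_motif_eq A hρ.le hgm hhm hg0 hbound d e hd he, ← hdplus, ENNReal.toReal_mul,
    ENNReal.toReal_pow, ENNReal.toReal_prod, ENNReal.toReal_ofReal hρ.le,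
    toReal_lintegral_ofReal_pow hgm.aemeasurable (ae_of_all _ hg0),
    toReal_lintegral_ofReal_pow hhm.aemeasurable (ae_of_all _ hh0)]
  simp only [hlam, hmu, prod_mul_distrib, prod_pow_eq_pow_sum, ← hdplus, hedges]
  field_simp

/-- Under the B-EDD model, the occurrence probability of any motif `s`
factorizes as `φ_s = (∏_u λ_{d_u} ∏_v μ_{e_v}) / ρ^{d_+}`, where
`λ_d = ρ^d ∫ g^d` (top-star probability) and `μ_d = ρ^d ∫ h^d` (bottom-star
probability), and `ρ` is the edge probability. -/
theorem motif_probability_star_factorization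
    (p q : ℕ) (A : Fin p → Fin q → Bool)
    (ρ : ℝ) (g h : ℝ → ℝ)
    (hgm : Measurable g) (hhm : Measurable h)
    (hg0 : ∀ u, 0 ≤ g u) (hh0 : ∀ v, 0 ≤ h v)
    (hgint : ∫ u in Set.Icc (0:ℝ) 1, g u = 1)
    (hhint : ∫ v in Set.Icc (0:ℝ) 1, h v = 1)
    (hρ : 0 < ρ)
    (hbound : ∀ u ∈ Set.Icc (0:ℝ) 1, ∀ v ∈ Set.Icc (0:ℝ) 1, ρ * g u * h v ≤ 1)
    (μ : Measure ((Fin p → ℝ) × (Fin q → ℝ) × (Fin p × Fin q → ℝ)))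
    (hμ : μ = (Measure.pi fun _ : Fin p => volume.restrict (Set.Icc (0:ℝ) 1)).prod
        ((Measure.pi fun _ : Fin q => volume.restrict (Set.Icc (0:ℝ) 1)).prod
          (Measure.pi fun _ : Fin p × Fin q => volume.restrict (Set.Icc (0:ℝ) 1))))
    (d : Fin p → ℕ) (e : Fin q → ℕ) (dplus : ℕ)
    (hd : ∀ i, d i = (univ.filter fun j => A i j = true).card)
    (he : ∀ j, e j = (univ.filter fun i => A i j = true).card)
    (hdplus : dplus = ∑ i, d i)
    (lam mu : ℕ → ℝ)
    (hlam : ∀ k, lam k = ρ ^ k * ∫ u in Set.Icc (0:ℝ) 1, g u ^ k)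
    (hmu : ∀ k, mu k = ρ ^ k * ∫ v in Set.Icc (0:ℝ) 1, h v ^ k) :
    (μ {ω | ∀ i j, A i j = true →
        ω.2.2 (i, j) ≤ ρ * g (ω.1 i) * h (ω.2.1 j)}).toReal
      = ((∏ i, lam (d i)) * (∏ j, mu (e j))) / ρ ^ dplus :=
  motif_probability_star_factorization_general p q A ρ g h hgm hhm hg0 hh0 hρ hbound μ hμ d e dplus
    hd he hdplus lam mu hlam hmu
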